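/- The set π_n^n(X,*) of rank-n homotopy classes of smooth n-loops in X is a group under the operation [ℓ₁]·[ℓ₂] = [ℓ₁ ⋆ ℓ₂]: this operation is well defined on rank-n homotopy classes, it is associative, the class of the constant loop at * is a two-sided identity, and for every smooth n-loop ℓ the class of the reverse ℓ̄ is a two-sided inverse of the class of ℓ. -/

import Mathlib

/-!
STATEMENT 9: the set of rank-n homotopy classes of smooth n-loops is a group under
concatenation, with the constant loop as identity and reversal as inversion.
-/

open scoped Manifold

noncomputable section

/-- A smooth `n`-loop in a manifold `X` based at `x₀`: a map `[0,1]ⁿ → X` which is smooth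
in the sense that it extends to a `C^∞` map on an open neighbourhood of the cube, and which
equals `x₀` whenever some coordinate lies in `[0,ε) ∪ (1-ε,1]`. -/
structure SmoothNLoop {E HM : Type*} [NormedAddCommGroup E] [NormedSpace ℝ E]
    [TopologicalSpace HM] (IM : ModelWithCorners ℝ E HM)
    (X : Type*) [TopologicalSpace X] [ChartedSpace HM X] (n : ℕ) (x₀ : X) : Type _ where
  toFun : (Fin n → ℝ) → X
  smooth : ∃ U : Set (Fin n → ℝ), IsOpen U ∧ Set.Icc 0 1 ⊆ U ∧
      ContMDiffOn 𝓘(ℝ, Fin n → ℝ) IM (⊤ : ℕ∞) toFun U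
  based : ∃ ε : ℝ, 0 < ε ∧ ∀ t ∈ Set.Icc (0 : Fin n → ℝ) 1,
      (∃ i, t i < ε ∨ 1 - ε < t i) → toFun t = x₀

/-- Rank-`n` (thin) homotopy of smooth `n`-loops: a homotopy `K : [0,1] × [0,1]ⁿ → X`,
smooth on an open neighbourhood of its domain, which is based (condition 1), starts at `ℓ₁`
(condition 2), ends at `ℓ₂` (condition 3), and whose total differential has rank `≤ n`
throughout its domain (condition 4). -/
def ThinHomotopic {E HM : Type*} [NormedAddCommGroup E] [NormedSpace ℝ E]
    [TopologicalSpace HM] {IM : ModelWithCorners ℝ E HM}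
    {X : Type*} [TopologicalSpace X] [ChartedSpace HM X] {n : ℕ} {x₀ : X}
    (ℓ₁ ℓ₂ : SmoothNLoop IM X n x₀) : Prop :=
  ∃ (K : ℝ × (Fin n → ℝ) → X) (ε : ℝ), 0 < ε ∧
    (∃ U : Set (ℝ × (Fin n → ℝ)), IsOpen U ∧
        Set.Icc (0 : ℝ) 1 ×ˢ Set.Icc (0 : Fin n → ℝ) 1 ⊆ U ∧
        ContMDiffOn 𝓘(ℝ, ℝ × (Fin n → ℝ)) IM (⊤ : ℕ∞) K U) ∧
    (∀ s ∈ Set.Icc (0 : ℝ) 1, ∀ t ∈ Set.Icc (0 : Fin n → ℝ) 1,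
        (∃ i, t i < ε ∨ 1 - ε < t i) → K (s, t) = x₀) ∧
    (∀ s ∈ Set.Icc (0 : ℝ) 1, ∀ t ∈ Set.Icc (0 : Fin n → ℝ) 1,
        s < ε → K (s, t) = ℓ₁.toFun t) ∧
    (∀ s ∈ Set.Icc (0 : ℝ) 1, ∀ t ∈ Set.Icc (0 : Fin n → ℝ) 1,
        1 - ε < s → K (s, t) = ℓ₂.toFun t) ∧
    (∀ p ∈ Set.Icc (0 : ℝ) 1 ×ˢ Set.Icc (0 : Fin n → ℝ) 1,
        LinearMap.rank (mfderiv 𝓘(ℝ, ℝ × (Fin n → ℝ)) IM K p).toLinearMap ≤ (n : Cardinal))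

/-- The unit cube `[0,1]ⁿ`. -/
def Cube (n : ℕ) : Set (Fin n → ℝ) := Set.Icc 0 1

/-- The concatenation `ℓ₁ ⋆ ℓ₂` (in the first cube coordinate) of two `n`-loops, as a
formula on the cube: `ℓ₁(2t₁, t₂, …)` for `t₁ ≤ 1/2`, and `ℓ₂(2t₁ - 1, t₂, …)` for
`t₁ ≥ 1/2`. -/
def concatFun {X : Type*} {n : ℕ} (hn : 0 < n) (f g : (Fin n → ℝ) → X) :
    (Fin n → ℝ) → X := fun t =>
  if t ⟨0, hn⟩ ≤ 1 / 2 then f (Function.update t ⟨0, hn⟩ (2 * t ⟨0, hn⟩))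
  else g (Function.update t ⟨0, hn⟩ (2 * t ⟨0, hn⟩ - 1))

/-- The reverse `ℓ̄` of an `n`-loop: `ℓ̄(t₁, t₂, …) = ℓ(1 - t₁, t₂, …)`. -/
def reverseFun {X : Type*} {n : ℕ} (hn : 0 < n) (f : (Fin n → ℝ) → X) :
    (Fin n → ℝ) → X := fun t =>
  f (Function.update t ⟨0, hn⟩ (1 - t ⟨0, hn⟩))

/-!
Every smooth `n`-loop, and every rank-`n` homotopy, can be replaced by a map that is defined and
smooth on all of `ℝⁿ` (resp. `ℝ × ℝⁿ`) and equal to `x₀` off a box `[δ, 1 - δ]ⁿ`: cut it off to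
`x₀` there, after reparametrising a homotopy in time by a smooth step. Concatenations of such
collared maps are again smooth, because both halves are `x₀` near the gluing hyperplane; gluing
homotopies this way shows that `⋆` is well defined on classes. Each group law identifies two
reparametrisations `ℓ (φ₀ t₁, t₂, …)` and `ℓ (φ₁ t₁, t₂, …)` of a single collared loop `ℓ`
(for instance `e ⋆ ℓ = ℓ (2 t₁ - 1, …)`, and `ℓ ⋆ ℓ̄` is `ℓ` composed with the tent map, smoothed
at its corner where `ℓ` is `x₀` anyway). The straight-line homotopy between `φ₀` and `φ₁` stays
collared and factors through `ℝⁿ`, so its differential has rank at most `n`.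
-/

open Set Function Filter Topology Real
open scoped ContDiff

namespace ThinHomotopy

section Scalar

variable {c η u : ℝ} {f g : ℝ → ℝ}

def smoothStep (c η u : ℝ) : ℝ := smoothTransition ((u - (c - η)) / (2 * η))

theorem contDiff_smoothStep : ContDiff ℝ ∞ (smoothStep c η) :=
  smoothTransition.contDiff.comp ((contDiff_id.sub contDiff_const).div_const _)

theorem smoothStep_of_le (hη : 0 < η) (h : u ≤ c - η) : smoothStep c η u = 0 :=
  smoothTransition.zero_of_nonpos (div_nonpos_of_nonpos_of_nonneg (by linarith) (by linarith))

theorem smoothStep_of_ge (hη : 0 < η) (h : c + η ≤ u) : smoothStep c η u = 1 :=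
  smoothTransition.one_of_one_le (by rw [le_div_iff₀ (by linarith)]; linarith)

theorem smoothStep_mem_Icc : smoothStep c η u ∈ Icc 0 1 :=
  ⟨smoothTransition.nonneg _, smoothTransition.le_one _⟩

def blend (c η : ℝ) (f g : ℝ → ℝ) (u : ℝ) : ℝ := f u + smoothStep c η u * (g u - f u)

theorem blend_of_le (hη : 0 < η) (h : u ≤ c - η) : blend c η f g u = f u := by
  simp [blend, smoothStep_of_le hη h]

theorem blend_of_ge (hη : 0 < η) (h : c + η ≤ u) : blend c η f g u = g u := by
  simp [blend, smoothStep_of_ge hη h]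

theorem blend_mem {S : Set ℝ} (hS : Convex ℝ S) (hf : f u ∈ S) (hg : g u ∈ S) :
    blend c η f g u ∈ S :=
  hS.add_smul_sub_mem hf hg smoothStep_mem_Icc

theorem _root_.ContDiff.blend (hf : ContDiff ℝ ∞ f) (hg : ContDiff ℝ ∞ g) :
    ContDiff ℝ ∞ (blend c η f g) :=
  hf.add (contDiff_smoothStep.mul (hg.sub hf))

def smoothTent (η : ℝ) : ℝ → ℝ := blend (1 / 2) η (fun u => 2 * u) (fun u => 2 - 2 * u)

/-- The piecewise linear map carrying `(f ⋆ g) ⋆ h` to `f ⋆ (g ⋆ h)`, smoothed at its corners. -/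
def assocReparam (η : ℝ) : ℝ → ℝ :=
  blend (3 / 4) η (blend (1 / 2) η (fun u => u / 2) (fun u => u - 1 / 4)) (fun u => 2 * u - 1)

theorem contDiff_smoothTent : ContDiff ℝ ∞ (smoothTent η) :=
  ContDiff.blend (by fun_prop) (by fun_prop)

theorem contDiff_assocReparam : ContDiff ℝ ∞ (assocReparam η) :=
  ContDiff.blend (ContDiff.blend (by fun_prop) (by fun_prop)) (by fun_prop)

end Scalar

section Cube

variable {n : ℕ} {δ v : ℝ} {t : Fin n → ℝ}

def openCube (n : ℕ) : Set (Fin n → ℝ) := univ.pi fun _ => Ioo 0 1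

def innerBox (n : ℕ) (δ : ℝ) : Set (Fin n → ℝ) := univ.pi fun _ => Icc δ (1 - δ)

theorem mem_cube : t ∈ Cube n ↔ ∀ i, t i ∈ Icc 0 1 := by
  rw [Cube, ← pi_univ_Icc, mem_univ_pi]; rfl

theorem isOpen_openCube : IsOpen (openCube n) :=
  isOpen_set_pi finite_univ fun _ _ => isOpen_Ioo

theorem isClosed_innerBox : IsClosed (innerBox n δ) :=
  isClosed_set_pi fun _ _ => isClosed_Icc

theorem openCube_subset_cube : openCube n ⊆ Cube n := fun _ ht =>
  mem_cube.2 fun i => Ioo_subset_Icc_self ((mem_univ_pi.1 ht) i)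

theorem innerBox_subset_openCube (hδ : 0 < δ) : innerBox n δ ⊆ openCube n := fun _ ht =>
  mem_univ_pi.2 fun i =>
    ⟨by linarith [(mem_univ_pi.1 ht i).1], by linarith [(mem_univ_pi.1 ht i).2]⟩

theorem notMem_innerBox : t ∉ innerBox n δ ↔ ∃ i, t i < δ ∨ 1 - δ < t i := by
  simp only [innerBox, mem_univ_pi, mem_Icc, not_forall, not_and_or, not_le]

theorem update_mem_cube (ht : t ∈ Cube n) (i : Fin n) (hv : v ∈ Icc 0 1) :
    update t i v ∈ Cube n := by
  refine mem_cube.2 fun j => ?_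
  rcases eq_or_ne j i with rfl | hj
  · rwa [update_self]
  · rw [update_of_ne hj]; exact mem_cube.1 ht j

theorem _root_.ContDiff.update {F : Type*} [NormedAddCommGroup F] [NormedSpace ℝ F]
    {T : F → Fin n → ℝ} {g : F → ℝ} (hT : ContDiff ℝ ∞ T) (i : Fin n) (hg : ContDiff ℝ ∞ g) :
    ContDiff ℝ ∞ fun p => Function.update (T p) i (g p) := by
  refine contDiff_pi.2 fun j => ?_
  rcases eq_or_ne j i with rfl | hj
  · simpa only [update_self] using hg
  · simpa only [update_of_ne hj] using contDiff_pi.1 hT j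

end Cube

section Collared

variable {X : Type*} {n : ℕ} {x₀ : X} {δ δ' v : ℝ} {t : Fin n → ℝ} {i j : Fin n}
  {L f g h f' g' : (Fin n → ℝ) → X}

/-- Unlike the basedness of a `SmoothNLoop`, this constrains `L` on all of `ℝⁿ`. -/
def IsCollared (δ : ℝ) (x₀ : X) (L : (Fin n → ℝ) → X) : Prop :=
  ∀ t, (∃ i, t i < δ ∨ 1 - δ < t i) → L t = x₀

theorem IsCollared.mono (hL : IsCollared δ x₀ L) (h : δ' ≤ δ) : IsCollared δ' x₀ L :=
  fun t ⟨i, hi⟩ => hL t ⟨i, hi.imp (fun _ => by linarith) fun _ => by linarith⟩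

theorem IsCollared.apply_update (hL : IsCollared δ x₀ L) (t : Fin n → ℝ) (i : Fin n)
    (hv : v < δ ∨ 1 - δ < v) : L (update t i v) = x₀ :=
  hL _ ⟨i, by rwa [update_self]⟩

theorem IsCollared.apply_update_of_ne (hL : IsCollared δ x₀ L) (hj : t j < δ ∨ 1 - δ < t j)
    (hji : j ≠ i) (v : ℝ) : L (update t i v) = x₀ :=
  hL _ ⟨j, by rwa [update_of_ne hji]⟩

def reparam (i : Fin n) (φ : ℝ → ℝ) (L : (Fin n → ℝ) → X) : (Fin n → ℝ) → X :=
  fun t => L (update t i (φ (t i)))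

theorem reparam_id : reparam i (fun u => u) L = L :=
  funext fun t => congrArg L (update_eq_self i t)

variable (hn : 0 < n)

theorem concatFun_of_le (ht : t ⟨0, hn⟩ ≤ 1 / 2) :
    concatFun hn f g t = f (update t ⟨0, hn⟩ (2 * t ⟨0, hn⟩)) :=
  if_pos ht

theorem concatFun_of_gt (ht : 1 / 2 < t ⟨0, hn⟩) :
    concatFun hn f g t = g (update t ⟨0, hn⟩ (2 * t ⟨0, hn⟩ - 1)) :=
  if_neg ht.not_ge

theorem concatFun_update_of_le (hv : v ≤ 1 / 2) :
    concatFun hn f g (update t ⟨0, hn⟩ v) = f (update t ⟨0, hn⟩ (2 * v)) := by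
  rw [concatFun_of_le hn (by rwa [update_self]), update_self, update_idem]

theorem concatFun_update_of_gt (hv : 1 / 2 < v) :
    concatFun hn f g (update t ⟨0, hn⟩ v) = g (update t ⟨0, hn⟩ (2 * v - 1)) := by
  rw [concatFun_of_gt hn (by rwa [update_self]), update_self, update_idem]

theorem concatFun_eqOn_cube (hf : EqOn f f' (Cube n)) (hg : EqOn g g' (Cube n)) :
    EqOn (concatFun hn f g) (concatFun hn f' g') (Cube n) := by
  intro t ht
  have ht0 := mem_cube.1 ht ⟨0, hn⟩
  rcases le_or_gt (t ⟨0, hn⟩) (1 / 2) with h | h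
  · rw [concatFun_of_le hn h, concatFun_of_le hn h]
    exact hf (update_mem_cube ht _ ⟨by linarith [ht0.1], by linarith⟩)
  · rw [concatFun_of_gt hn h, concatFun_of_gt hn h]
    exact hg (update_mem_cube ht _ ⟨by linarith, by linarith [ht0.2]⟩)

theorem IsCollared.concat (hf : IsCollared δ x₀ f) (hg : IsCollared δ x₀ g) (hδ : 0 < δ) :
    IsCollared (δ / 2) x₀ (concatFun hn f g) := by
  rintro t ⟨j, hj⟩
  rcases le_or_gt (t ⟨0, hn⟩) (1 / 2) with h | h
  · rw [concatFun_of_le hn h]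
    rcases eq_or_ne j ⟨0, hn⟩ with rfl | hj0
    · exact hf.apply_update _ _ (hj.imp (fun _ => by linarith) fun _ => by linarith)
    · exact hf.apply_update_of_ne (hj.imp (fun _ => by linarith) fun _ => by linarith) hj0 _
  · rw [concatFun_of_gt hn h]
    rcases eq_or_ne j ⟨0, hn⟩ with rfl | hj0
    · exact hg.apply_update _ _ (hj.imp (fun _ => by linarith) fun _ => by linarith)
    · exact hg.apply_update_of_ne (hj.imp (fun _ => by linarith) fun _ => by linarith) hj0 _

theorem IsCollared.concatFun_eq_of_mem_Ioo (hf : IsCollared δ x₀ f) (hg : IsCollared δ x₀ g)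
    (ht : t ⟨0, hn⟩ ∈ Ioo (1 / 2 - δ / 2) (1 / 2 + δ / 2)) : concatFun hn f g t = x₀ := by
  rcases le_or_gt (t ⟨0, hn⟩) (1 / 2) with h | h
  · rw [concatFun_of_le hn h]; exact hf.apply_update _ _ (Or.inr (by linarith [ht.1]))
  · rw [concatFun_of_gt hn h]; exact hg.apply_update _ _ (Or.inl (by linarith [ht.2]))

theorem reverseFun_reverseFun : reverseFun hn (reverseFun hn f) = f := by
  funext t
  simp only [reverseFun, update_self, update_idem, sub_sub_cancel, update_eq_self]

theorem reverseFun_eqOn_cube (hf : EqOn f f' (Cube n)) :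
    EqOn (reverseFun hn f) (reverseFun hn f') (Cube n) := fun t ht => by
  have ht0 := mem_cube.1 ht ⟨0, hn⟩
  exact hf (update_mem_cube ht _ ⟨by linarith [ht0.2], by linarith [ht0.1]⟩)

theorem IsCollared.reverse (hf : IsCollared δ x₀ f) : IsCollared δ x₀ (reverseFun hn f) := by
  rintro t ⟨j, hj⟩
  rcases eq_or_ne j ⟨0, hn⟩ with rfl | hj0
  · exact hf.apply_update _ _ (hj.symm.imp (fun _ => by linarith) fun _ => by linarith)
  · exact hf.apply_update_of_ne hj hj0 _

theorem IsCollared.const_concatFun (hL : IsCollared δ x₀ L) (hδ : 0 < δ) :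
    concatFun hn (fun _ => x₀) L = reparam ⟨0, hn⟩ (fun u => 2 * u - 1) L := by
  funext t
  rcases le_or_gt (t ⟨0, hn⟩) (1 / 2) with h | h
  · rw [concatFun_of_le hn h]; exact (hL.apply_update _ _ (Or.inl (by linarith))).symm
  · exact concatFun_of_gt hn h

theorem IsCollared.concatFun_const (hL : IsCollared δ x₀ L) (hδ : 0 < δ) :
    concatFun hn L (fun _ => x₀) = reparam ⟨0, hn⟩ (fun u => 2 * u) L := by
  funext t
  rcases le_or_gt (t ⟨0, hn⟩) (1 / 2) with h | h
  · exact concatFun_of_le hn h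
  · rw [concatFun_of_gt hn h]; exact (hL.apply_update _ _ (Or.inr (by linarith))).symm

theorem IsCollared.concatFun_reverseFun (hL : IsCollared δ x₀ L) (hδ : 0 < δ) :
    concatFun hn L (reverseFun hn L) = reparam ⟨0, hn⟩ (smoothTent (δ / 4)) L := by
  funext t
  have hrev (h : 1 / 2 < t ⟨0, hn⟩) :
      concatFun hn L (reverseFun hn L) t = L (update t ⟨0, hn⟩ (2 - 2 * t ⟨0, hn⟩)) := by
    rw [concatFun_of_gt hn h, reverseFun, update_self, update_idem]
    ring_nf
  rw [reparam, smoothTent]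
  rcases le_or_gt (t ⟨0, hn⟩) (1 / 2 - δ / 4) with h₁ | h₁
  · rw [concatFun_of_le hn (by linarith), blend_of_le (by positivity) h₁]
  rcases le_or_gt (1 / 2 + δ / 4) (t ⟨0, hn⟩) with h₂ | h₂
  · rw [hrev (by linarith), blend_of_ge (by positivity) h₂]
  rw [hL.apply_update _ _ (Or.inr (blend_mem (convex_Ioi (1 - δ))
    (show 1 - δ < 2 * t ⟨0, hn⟩ by linarith) (show 1 - δ < 2 - 2 * t ⟨0, hn⟩ by linarith)))]
  rcases le_or_gt (t ⟨0, hn⟩) (1 / 2) with h | h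
  · rw [concatFun_of_le hn h]; exact hL.apply_update _ _ (Or.inr (by linarith))
  · rw [hrev h]; exact hL.apply_update _ _ (Or.inr (by linarith))

theorem IsCollared.concatFun_assoc (hf : IsCollared δ x₀ f) (hg : IsCollared δ x₀ g)
    (hh : IsCollared δ x₀ h) (hδ : 0 < δ) (hδ₁ : δ ≤ 1) :
    reparam ⟨0, hn⟩ (assocReparam (δ / 8)) (concatFun hn (concatFun hn f g) h) =
      concatFun hn f (concatFun hn g h) := by
  funext t
  have hη : 0 < δ / 8 := by positivity
  have hfg (t) := (hf.concat hn hg hδ).concatFun_eq_of_mem_Ioo hn (t := t)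
    (hh.mono (half_le_self hδ.le))
  have hgh (t) := (hf.mono (half_le_self hδ.le)).concatFun_eq_of_mem_Ioo hn (t := t)
    (hg.concat hn hh hδ)
  -- Away from `1/2` and `3/4` both sides evaluate the same one of `f`, `g`, `h`; near those
  -- points both sides sit on a junction of a concatenation, where they are `x₀`.
  rw [reparam, assocReparam]
  rcases le_or_gt (t ⟨0, hn⟩) (1 / 2 - δ / 8) with h₁ | h₁
  · rw [blend_of_le hη (by linarith), blend_of_le hη h₁, concatFun_update_of_le hn (by linarith),
      concatFun_update_of_le hn (by linarith), concatFun_of_le hn (by linarith)]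
    ring_nf
  rcases lt_or_ge (t ⟨0, hn⟩) (1 / 2 + δ / 8) with h₂ | h₂
  · have hv : blend (1 / 2) (δ / 8) (fun u => u / 2) (fun u => u - 1 / 4) (t ⟨0, hn⟩) ∈
        Ioo (1 / 4 - δ / 8) (1 / 4 + δ / 8) :=
      blend_mem (convex_Ioo _ _) ⟨by linarith, by linarith⟩ ⟨by linarith, by linarith⟩
    rw [blend_of_le hη (by linarith), concatFun_update_of_le hn (by linarith [hv.2]),
      hgh t ⟨by linarith, by linarith⟩]
    exact hf.concatFun_eq_of_mem_Ioo hn hg (by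
      rw [update_self]; constructor <;> linarith [hv.1, hv.2])
  rcases le_or_gt (t ⟨0, hn⟩) (3 / 4 - δ / 8) with h₃ | h₃
  · rw [blend_of_le hη h₃, blend_of_ge hη h₂, concatFun_update_of_le hn (by linarith),
      concatFun_update_of_gt hn (by linarith), concatFun_of_gt hn (by linarith),
      concatFun_update_of_le hn (by linarith)]
    ring_nf
  rcases le_or_gt (3 / 4 + δ / 8) (t ⟨0, hn⟩) with h₄ | h₄
  · rw [blend_of_ge hη h₄, concatFun_update_of_gt hn (by linarith),
      concatFun_of_gt hn (by linarith), concatFun_update_of_gt hn (by linarith)]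
  · have hv : assocReparam (δ / 8) (t ⟨0, hn⟩) ∈ Ioo (1 / 2 - δ / 4) (1 / 2 + δ / 4) := by
      refine blend_mem (convex_Ioo _ _) ?_ ⟨by linarith, by linarith⟩
      rw [blend_of_ge hη h₂]
      constructor <;> linarith
    rw [← assocReparam, hfg _ (by rw [update_self]; constructor <;> linarith [hv.1, hv.2]),
      concatFun_of_gt hn (by linarith)]
    exact (hg.concatFun_eq_of_mem_Ioo hn hh (by
      rw [update_self]; constructor <;> linarith)).symm

end Collared

section Gluing

variable {X : Type*} {x₀ : X} {η : ℝ}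

theorem ite_eventuallyEq {α : Type*} [TopologicalSpace α] {τ : α → ℝ} (hτ : Continuous τ)
    {f g : α → X} (hη : 0 < η) (hf : ∀ q, τ q ∈ Ioo (1 / 2 - η) (1 / 2 + η) → f q = x₀)
    (hg : ∀ q, τ q ∈ Ioo (1 / 2 - η) (1 / 2 + η) → g q = x₀) (q : α) :
    (fun q => if τ q ≤ 1 / 2 then f q else g q) =ᶠ[𝓝 q] f ∨
      (fun q => if τ q ≤ 1 / 2 then f q else g q) =ᶠ[𝓝 q] g := by
  by_cases hq : τ q ≤ 1 / 2
  · refine Or.inl ?_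
    filter_upwards [(isOpen_lt hτ continuous_const).mem_nhds (by linarith : τ q < 1 / 2 + η)]
      with q' hq'
    split_ifs with h
    · rfl
    · have hq'' : τ q' ∈ Ioo (1 / 2 - η) (1 / 2 + η) := ⟨by linarith, hq'⟩
      rw [hg q' hq'', hf q' hq'']
  · refine Or.inr ?_
    filter_upwards [(isOpen_lt continuous_const hτ).mem_nhds (not_le.1 hq)] with q' hq'
    exact if_neg (not_le.2 hq')

variable {n : ℕ} {δ : ℝ} {α : Type*} {ρ : α → Fin n → ℝ} {f : α → X} {q : α}

open scoped Classical in
def cutoff (δ : ℝ) (x₀ : X) (ρ : α → Fin n → ℝ) (f : α → X) (q : α) : X :=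
  if ρ q ∈ innerBox n δ then f q else x₀

theorem cutoff_of_notMem (hq : ρ q ∉ innerBox n δ) : cutoff δ x₀ ρ f q = x₀ :=
  if_neg hq

theorem cutoff_eq_self (hf : ∀ q, ρ q ∈ Cube n → ρ q ∉ innerBox n δ → f q = x₀)
    (hq : ρ q ∈ Cube n) : cutoff δ x₀ ρ f q = f q := by
  unfold cutoff
  split_ifs with hb
  · rfl
  · exact (hf q hq hb).symm

theorem cutoff_eventuallyEq [TopologicalSpace α] (hρ : Continuous ρ) (hδ : 0 < δ)
    (hf : ∀ q, ρ q ∈ Cube n → ρ q ∉ innerBox n δ → f q = x₀) (q : α) :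
    (ρ q ∈ openCube n ∧ cutoff δ x₀ ρ f =ᶠ[𝓝 q] f) ∨ cutoff δ x₀ ρ f =ᶠ[𝓝 q] fun _ => x₀ := by
  by_cases hq : ρ q ∈ openCube n
  · refine Or.inl ⟨hq, ?_⟩
    filter_upwards [(isOpen_openCube.preimage hρ).mem_nhds hq] with q' hq'
    exact cutoff_eq_self hf (openCube_subset_cube hq')
  · refine Or.inr ?_
    filter_upwards [(isClosed_innerBox.preimage hρ).isOpen_compl.mem_nhds
      fun hb => hq (innerBox_subset_openCube hδ hb)] with q' hq'
    exact cutoff_of_notMem hq'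

end Gluing

section Smooth

variable {E HM : Type*} [NormedAddCommGroup E] [NormedSpace ℝ E] [TopologicalSpace HM]
  {IM : ModelWithCorners ℝ E HM} {X : Type*} [TopologicalSpace X] [ChartedSpace HM X]
  {F F' : Type*} [NormedAddCommGroup F] [NormedSpace ℝ F] [NormedAddCommGroup F']
  [NormedSpace ℝ F'] {n : ℕ} {x₀ : X} {η : ℝ} {τ : F → ℝ} {f g : F → X}

theorem _root_.ContMDiff.ite_of_eq_near_half (hτ : Continuous τ) (hη : 0 < η)
    (hf : ContMDiff 𝓘(ℝ, F) IM ∞ f) (hg : ContMDiff 𝓘(ℝ, F) IM ∞ g)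
    (hf₀ : ∀ q, τ q ∈ Ioo (1 / 2 - η) (1 / 2 + η) → f q = x₀)
    (hg₀ : ∀ q, τ q ∈ Ioo (1 / 2 - η) (1 / 2 + η) → g q = x₀) :
    ContMDiff 𝓘(ℝ, F) IM ∞ fun q => if τ q ≤ 1 / 2 then f q else g q := fun q =>
  (ite_eventuallyEq hτ hη hf₀ hg₀ q).elim (fun h => (hf q).congr_of_eventuallyEq h)
    fun h => (hg q).congr_of_eventuallyEq h

theorem rank_mfderiv_ite_le (hτ : Continuous τ) (hη : 0 < η)
    (hf₀ : ∀ q, τ q ∈ Ioo (1 / 2 - η) (1 / 2 + η) → f q = x₀)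
    (hg₀ : ∀ q, τ q ∈ Ioo (1 / 2 - η) (1 / 2 + η) → g q = x₀) {r : Cardinal}
    (hf : ∀ q, (mfderiv 𝓘(ℝ, F) IM f q).toLinearMap.rank ≤ r)
    (hg : ∀ q, (mfderiv 𝓘(ℝ, F) IM g q).toLinearMap.rank ≤ r) (q : F) :
    (mfderiv 𝓘(ℝ, F) IM (fun q => if τ q ≤ 1 / 2 then f q else g q) q).toLinearMap.rank
      ≤ r := by
  rcases ite_eventuallyEq hτ hη hf₀ hg₀ q with h | h
  · rw [h.mfderiv_eq]; exact hf q
  · rw [h.mfderiv_eq]; exact hg q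

theorem rank_mfderiv_comp_le {L : F' → X} {Φ : F → F'} {p : F}
    (hL : MDifferentiableAt 𝓘(ℝ, F') IM L (Φ p)) (hΦ : DifferentiableAt ℝ Φ p) :
    (mfderiv 𝓘(ℝ, F) IM (fun q => L (Φ q)) p).toLinearMap.rank ≤
      (mfderiv 𝓘(ℝ, F') IM L (Φ p)).toLinearMap.rank := by
  rw [show (fun q => L (Φ q)) = L ∘ Φ from rfl, mfderiv_comp p hL hΦ.mdifferentiableAt]
  exact LinearMap.rank_comp_le_left _ _

theorem rank_mfderiv_le_of_fin (L : (Fin n → ℝ) → X) (t : Fin n → ℝ) :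
    (mfderiv 𝓘(ℝ, Fin n → ℝ) IM L t).toLinearMap.rank ≤ n := by
  have h := lift_rank_range_le (mfderiv 𝓘(ℝ, Fin n → ℝ) IM L t).toLinearMap
  rwa [Cardinal.lift_uzero, show Module.rank ℝ (TangentSpace 𝓘(ℝ, Fin n → ℝ) t) = n from
    rank_fin_fun n, Cardinal.lift_natCast] at h

theorem rank_mfderiv_const_le (r : Cardinal) (p : F) :
    (mfderiv 𝓘(ℝ, F) IM (fun _ => x₀) p).toLinearMap.rank ≤ r := by
  simp [mfderiv_const]

theorem contMDiff_cutoff {δ : ℝ} {ρ : F → Fin n → ℝ} (hρ : Continuous ρ) (hδ : 0 < δ)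
    (hf₀ : ∀ q, ρ q ∈ Cube n → ρ q ∉ innerBox n δ → f q = x₀)
    (hf : ∀ q, ρ q ∈ openCube n → ContMDiffAt 𝓘(ℝ, F) IM ∞ f q) :
    ContMDiff 𝓘(ℝ, F) IM ∞ (cutoff δ x₀ ρ f) := fun q =>
  (cutoff_eventuallyEq hρ hδ hf₀ q).elim (fun h => (hf q h.1).congr_of_eventuallyEq h.2)
    fun h => contMDiffAt_const.congr_of_eventuallyEq h

theorem rank_mfderiv_cutoff_le {δ : ℝ} {ρ : F → Fin n → ℝ} (hρ : Continuous ρ) (hδ : 0 < δ)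
    (hf₀ : ∀ q, ρ q ∈ Cube n → ρ q ∉ innerBox n δ → f q = x₀) {r : Cardinal}
    (hf : ∀ q, ρ q ∈ openCube n → (mfderiv 𝓘(ℝ, F) IM f q).toLinearMap.rank ≤ r) (q : F) :
    (mfderiv 𝓘(ℝ, F) IM (cutoff δ x₀ ρ f) q).toLinearMap.rank ≤ r := by
  rcases cutoff_eventuallyEq hρ hδ hf₀ q with ⟨hq, h⟩ | h
  · rw [h.mfderiv_eq]; exact hf q hq
  · rw [h.mfderiv_eq]; exact rank_mfderiv_const_le r q

end Smooth

section Homotopy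

variable {E HM : Type*} [NormedAddCommGroup E] [NormedSpace ℝ E] [TopologicalSpace HM]
  {IM : ModelWithCorners ℝ E HM} {X : Type*} [TopologicalSpace X] [ChartedSpace HM X]
  {n : ℕ} {x₀ : X} {δ δ' η : ℝ} {L f g h ℓ₁ ℓ₂ ℓ₁' ℓ₂' : (Fin n → ℝ) → X}

variable (IM) in
/-- A globally defined variant of the homotopies in `ThinHomotopic`. -/
structure IsCollaredHomotopy (δ : ℝ) (x₀ : X) (ℓ₁ ℓ₂ : (Fin n → ℝ) → X)
    (K : ℝ × (Fin n → ℝ) → X) : Prop where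
  contMDiff : ContMDiff 𝓘(ℝ, ℝ × (Fin n → ℝ)) IM ∞ K
  collared (s : ℝ) : IsCollared δ x₀ fun t => K (s, t)
  eqOn_start (s : ℝ) (hs : s < δ) : EqOn (fun t => K (s, t)) ℓ₁ (Cube n)
  eqOn_end (s : ℝ) (hs : 1 - δ < s) : EqOn (fun t => K (s, t)) ℓ₂ (Cube n)
  rank_le (p : ℝ × (Fin n → ℝ)) : (mfderiv 𝓘(ℝ, ℝ × (Fin n → ℝ)) IM K p).toLinearMap.rank ≤ n

variable (IM) in
def CollaredHomotopic (δ : ℝ) (x₀ : X) (ℓ₁ ℓ₂ : (Fin n → ℝ) → X) : Prop :=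
  ∃ K, IsCollaredHomotopy IM δ x₀ ℓ₁ ℓ₂ K

namespace CollaredHomotopic

theorem mono (h : CollaredHomotopic IM δ x₀ ℓ₁ ℓ₂) (hδ : δ' ≤ δ) :
    CollaredHomotopic IM δ' x₀ ℓ₁ ℓ₂ :=
  let ⟨K, hK⟩ := h
  ⟨K, hK.contMDiff, fun s => (hK.collared s).mono hδ,
    fun s hs => hK.eqOn_start s (by linarith), fun s hs => hK.eqOn_end s (by linarith), hK.rank_le⟩

theorem congr (h : CollaredHomotopic IM δ x₀ ℓ₁ ℓ₂) (h₁ : EqOn ℓ₁ ℓ₁' (Cube n))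
    (h₂ : EqOn ℓ₂ ℓ₂' (Cube n)) : CollaredHomotopic IM δ x₀ ℓ₁' ℓ₂' :=
  let ⟨K, hK⟩ := h
  ⟨K, hK.contMDiff, hK.collared, fun s hs => (hK.eqOn_start s hs).trans h₁,
    fun s hs => (hK.eqOn_end s hs).trans h₂, hK.rank_le⟩

theorem thinHomotopic {ℓ₁ ℓ₂ : SmoothNLoop IM X n x₀}
    (h : CollaredHomotopic IM δ x₀ ℓ₁.toFun ℓ₂.toFun) (hδ : 0 < δ) : ThinHomotopic ℓ₁ ℓ₂ :=
  let ⟨K, hK⟩ := h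
  ⟨K, δ, hδ, ⟨univ, isOpen_univ, subset_univ _, hK.contMDiff.contMDiffOn⟩,
    fun s _ t _ => hK.collared s t, fun s _ _ ht hs => hK.eqOn_start s hs ht,
    fun s _ _ ht hs => hK.eqOn_end s hs ht, fun p _ => hK.rank_le p⟩

theorem concat (hn : 0 < n) (hf : CollaredHomotopic IM δ x₀ ℓ₁ ℓ₂)
    (hg : CollaredHomotopic IM δ x₀ ℓ₁' ℓ₂') (hδ : 0 < δ) :
    CollaredHomotopic IM (δ / 2) x₀ (concatFun hn ℓ₁ ℓ₁') (concatFun hn ℓ₂ ℓ₂') := by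
  obtain ⟨Kf, hKf⟩ := hf
  obtain ⟨Kg, hKg⟩ := hg
  have hτ : Continuous fun p : ℝ × (Fin n → ℝ) => p.2 ⟨0, hn⟩ :=
    (continuous_apply _).comp continuous_snd
  have happ : ContDiff ℝ ∞ fun p : ℝ × (Fin n → ℝ) => p.2 ⟨0, hn⟩ :=
    (contDiff_apply ℝ ℝ _).comp contDiff_snd
  have hΦf : ContDiff ℝ ∞ fun p : ℝ × (Fin n → ℝ) =>
      (p.1, update p.2 ⟨0, hn⟩ (2 * p.2 ⟨0, hn⟩)) :=
    contDiff_fst.prodMk (contDiff_snd.update _ (contDiff_const.mul happ))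
  have hΦg : ContDiff ℝ ∞ fun p : ℝ × (Fin n → ℝ) =>
      (p.1, update p.2 ⟨0, hn⟩ (2 * p.2 ⟨0, hn⟩ - 1)) :=
    contDiff_fst.prodMk (contDiff_snd.update _ ((contDiff_const.mul happ).sub contDiff_const))
  have hf₀ (p : ℝ × (Fin n → ℝ)) (hp : p.2 ⟨0, hn⟩ ∈ Ioo (1 / 2 - δ / 2) (1 / 2 + δ / 2)) :
      Kf (p.1, update p.2 ⟨0, hn⟩ (2 * p.2 ⟨0, hn⟩)) = x₀ :=
    (hKf.collared p.1).apply_update _ _ (Or.inr (by linarith [hp.1]))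
  have hg₀ (p : ℝ × (Fin n → ℝ)) (hp : p.2 ⟨0, hn⟩ ∈ Ioo (1 / 2 - δ / 2) (1 / 2 + δ / 2)) :
      Kg (p.1, update p.2 ⟨0, hn⟩ (2 * p.2 ⟨0, hn⟩ - 1)) = x₀ :=
    (hKg.collared p.1).apply_update _ _ (Or.inl (by linarith [hp.2]))
  refine ⟨fun p => concatFun hn (fun t => Kf (p.1, t)) (fun t => Kg (p.1, t)) p.2,
    ContMDiff.ite_of_eq_near_half hτ (half_pos hδ) (hKf.contMDiff.comp hΦf.contMDiff)
      (hKg.contMDiff.comp hΦg.contMDiff) hf₀ hg₀,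
    fun s => (hKf.collared s).concat hn (hKg.collared s) hδ,
    fun s hs => concatFun_eqOn_cube hn (hKf.eqOn_start s (by linarith))
      (hKg.eqOn_start s (by linarith)),
    fun s hs => concatFun_eqOn_cube hn (hKf.eqOn_end s (by linarith))
      (hKg.eqOn_end s (by linarith)),
    rank_mfderiv_ite_le hτ (half_pos hδ) hf₀ hg₀ (fun p => ?_) fun p => ?_⟩
  · exact (rank_mfderiv_comp_le (hKf.contMDiff.mdifferentiableAt (by simp))
      (hΦf.differentiable (by simp) p)).trans (hKf.rank_le _)
  · exact (rank_mfderiv_comp_le (hKg.contMDiff.mdifferentiableAt (by simp))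
      (hΦg.differentiable (by simp) p)).trans (hKg.rank_le _)

end CollaredHomotopic

theorem _root_.ThinHomotopic.eventually_collaredHomotopic {ℓ₁ ℓ₂ : SmoothNLoop IM X n x₀}
    (h : ThinHomotopic ℓ₁ ℓ₂) : ∀ᶠ δ in 𝓝[>] 0, CollaredHomotopic IM δ x₀ ℓ₁.toFun ℓ₂.toFun := by
  obtain ⟨K, ε, hε, ⟨U, hU, hsub, hK⟩, hbase, hstart, hend, hrank⟩ := h
  set δ := min ε (1 / 3)
  have hδ : 0 < δ := lt_min hε (by norm_num)
  -- `σ` is `0` up to time `1/3` and `1` from time `2/3` on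
  set σ := smoothStep (1 / 2) (1 / 6)
  have hΦ : ContDiff ℝ ∞ fun p : ℝ × (Fin n → ℝ) => (σ p.1, p.2) :=
    (contDiff_smoothStep.comp contDiff_fst).prodMk contDiff_snd
  have hΦmem (p : ℝ × (Fin n → ℝ)) (hp : p.2 ∈ openCube n) :
      (σ p.1, p.2) ∈ Icc 0 1 ×ˢ Icc 0 1 :=
    ⟨smoothStep_mem_Icc, openCube_subset_cube hp⟩
  have hf₀ (p : ℝ × (Fin n → ℝ)) (hp : p.2 ∈ Cube n) (hb : p.2 ∉ innerBox n δ) :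
      K (σ p.1, p.2) = x₀ := by
    obtain ⟨i, hi⟩ := notMem_innerBox.1 hb
    exact hbase _ smoothStep_mem_Icc _ hp ⟨i, hi.imp (fun _ => by linarith [min_le_left ε (1 / 3)])
      fun _ => by linarith [min_le_left ε (1 / 3)]⟩
  have hKat (p : ℝ × (Fin n → ℝ)) (hp : p.2 ∈ openCube n) :
      ContMDiffAt 𝓘(ℝ, ℝ × (Fin n → ℝ)) IM ∞ K (σ p.1, p.2) :=
    hK.contMDiffAt (hU.mem_nhds (hsub (hΦmem p hp)))
  filter_upwards [Ioo_mem_nhdsGT hδ] with δ' hδ'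
  refine CollaredHomotopic.mono ⟨cutoff δ x₀ Prod.snd fun p => K (σ p.1, p.2),
    contMDiff_cutoff continuous_snd hδ hf₀ fun p hp => (hKat p hp).comp p hΦ.contMDiff.contMDiffAt,
    fun s t ht => cutoff_of_notMem (notMem_innerBox.2 ht), fun s hs t ht => ?_,
    fun s hs t ht => ?_, rank_mfderiv_cutoff_le continuous_snd hδ hf₀ fun p hp => ?_⟩ hδ'.2.le
  · have hσ : σ s = 0 := smoothStep_of_le (by norm_num) (by linarith [min_le_right ε (1 / 3)])
    beta_reduce
    rw [cutoff_eq_self hf₀ (q := (s, t)) ht, hσ]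
    exact hstart 0 ⟨le_rfl, zero_le_one⟩ t ht hε
  · have hσ : σ s = 1 := smoothStep_of_ge (by norm_num) (by linarith [min_le_right ε (1 / 3)])
    beta_reduce
    rw [cutoff_eq_self hf₀ (q := (s, t)) ht, hσ]
    exact hend 1 ⟨zero_le_one, le_rfl⟩ t ht (by linarith)
  · exact (rank_mfderiv_comp_le (Φ := fun p : ℝ × (Fin n → ℝ) => (σ p.1, p.2))
      ((hKat p hp).mdifferentiableAt (by simp)) (hΦ.differentiable (by simp) p)).trans
      (hrank _ (hΦmem p hp))

theorem _root_.SmoothNLoop.eventually_collared (a : SmoothNLoop IM X n x₀) :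
    ∀ᶠ δ in 𝓝[>] 0, ∃ L, ContMDiff 𝓘(ℝ, Fin n → ℝ) IM ∞ L ∧ IsCollared δ x₀ L ∧
      EqOn L a.toFun (Cube n) := by
  obtain ⟨U, hU, hcube, ha⟩ := a.smooth
  obtain ⟨ε, hε, hbase⟩ := a.based
  have hf₀ (t : Fin n → ℝ) (ht : t ∈ Cube n) (hb : t ∉ innerBox n ε) : a.toFun t = x₀ :=
    hbase t ht (notMem_innerBox.1 hb)
  filter_upwards [Ioo_mem_nhdsGT hε] with δ hδ
  exact ⟨cutoff ε x₀ id a.toFun, contMDiff_cutoff continuous_id hε hf₀ fun t ht =>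
      ha.contMDiffAt (hU.mem_nhds (hcube (openCube_subset_cube ht))),
    IsCollared.mono (fun t ht => cutoff_of_notMem (notMem_innerBox.2 ht)) hδ.2.le,
    fun t ht => cutoff_eq_self hf₀ ht⟩

def _root_.SmoothNLoop.ofCollared (hL : ContMDiff 𝓘(ℝ, Fin n → ℝ) IM ∞ L) (hδ : 0 < δ)
    (hLc : IsCollared δ x₀ L) : SmoothNLoop IM X n x₀ where
  toFun := L
  smooth := ⟨univ, isOpen_univ, subset_univ _, hL.contMDiffOn⟩
  based := ⟨δ, hδ, fun t _ => hLc t⟩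

variable (hn : 0 < n)

theorem _root_.ContMDiff.concat (hf : ContMDiff 𝓘(ℝ, Fin n → ℝ) IM ∞ f)
    (hg : ContMDiff 𝓘(ℝ, Fin n → ℝ) IM ∞ g) (hfc : IsCollared δ x₀ f) (hgc : IsCollared δ x₀ g)
    (hδ : 0 < δ) : ContMDiff 𝓘(ℝ, Fin n → ℝ) IM ∞ (concatFun hn f g) :=
  have happ : ContDiff ℝ ∞ fun t : Fin n → ℝ => t ⟨0, hn⟩ := contDiff_apply ℝ ℝ _
  ContMDiff.ite_of_eq_near_half (continuous_apply _) (half_pos hδ)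
    (hf.comp (contDiff_id.update _ (contDiff_const.mul happ)).contMDiff)
    (hg.comp (contDiff_id.update _ ((contDiff_const.mul happ).sub contDiff_const)).contMDiff)
    (fun t ht => hfc.apply_update _ _ (Or.inr (by linarith [ht.1])))
    fun t ht => hgc.apply_update _ _ (Or.inl (by linarith [ht.2]))

theorem _root_.ContMDiff.reverse (hf : ContMDiff 𝓘(ℝ, Fin n → ℝ) IM ∞ f) :
    ContMDiff 𝓘(ℝ, Fin n → ℝ) IM ∞ (reverseFun hn f) :=
  hf.comp (contDiff_id.update _ (contDiff_const.sub (contDiff_apply ℝ ℝ _))).contMDiff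

theorem collaredHomotopic_reparam (hL : ContMDiff 𝓘(ℝ, Fin n → ℝ) IM ∞ L)
    (hLc : IsCollared δ x₀ L) (i : Fin n) {φ₀ φ₁ : ℝ → ℝ} (h₀ : ContDiff ℝ ∞ φ₀)
    (h₁ : ContDiff ℝ ∞ φ₁) (hη : η ≤ δ)
    (hφ : ∀ u, u < η ∨ 1 - η < u → (φ₀ u < δ ∧ φ₁ u < δ) ∨ (1 - δ < φ₀ u ∧ 1 - δ < φ₁ u)) :
    CollaredHomotopic IM (min η (1 / 3)) x₀ (reparam i φ₀ L) (reparam i φ₁ L) := by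
  set σ := smoothStep (1 / 2) (1 / 6)
  have happ : ContDiff ℝ ∞ fun p : ℝ × (Fin n → ℝ) => p.2 i :=
    (contDiff_apply ℝ ℝ _).comp contDiff_snd
  have hΨ : ContDiff ℝ ∞ fun p : ℝ × (Fin n → ℝ) =>
      update p.2 i (φ₀ (p.2 i) + σ p.1 * (φ₁ (p.2 i) - φ₀ (p.2 i))) :=
    contDiff_snd.update _ ((h₀.comp happ).add ((contDiff_smoothStep.comp contDiff_fst).mul
      ((h₁.comp happ).sub (h₀.comp happ))))
  refine ⟨fun p => L (update p.2 i (φ₀ (p.2 i) + σ p.1 * (φ₁ (p.2 i) - φ₀ (p.2 i)))),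
    hL.comp hΨ.contMDiff, fun s t ⟨j, hj⟩ => ?_, fun s hs t _ => ?_, fun s hs t _ => ?_,
    fun p => (rank_mfderiv_comp_le (hL.mdifferentiableAt (by simp))
      (hΨ.differentiable (by simp) p)).trans (rank_mfderiv_le_of_fin _ _)⟩
  · have hη' := min_le_left η (1 / 3)
    rcases eq_or_ne j i with rfl | hji
    · refine hLc.apply_update _ _ ?_
      rcases hφ (t j) (hj.imp (fun _ => by linarith) fun _ => by linarith) with ⟨h0, h1⟩ | ⟨h0, h1⟩
      · exact Or.inl ((convex_Iio δ).add_smul_sub_mem h0 h1 smoothStep_mem_Icc)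
      · exact Or.inr ((convex_Ioi (1 - δ)).add_smul_sub_mem h0 h1 smoothStep_mem_Icc)
    · exact hLc.apply_update_of_ne (hj.imp (fun _ => by linarith) fun _ => by linarith) hji _
  · have hσ : σ s = 0 := smoothStep_of_le (by norm_num) (by linarith [min_le_right η (1 / 3)])
    simp only [hσ, zero_mul, add_zero, reparam]
  · have hσ : σ s = 1 := smoothStep_of_ge (by norm_num) (by linarith [min_le_right η (1 / 3)])
    simp only [hσ, one_mul, add_sub_cancel, reparam]

theorem collaredHomotopic_const_concat (hL : ContMDiff 𝓘(ℝ, Fin n → ℝ) IM ∞ L)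
    (hLc : IsCollared δ x₀ L) (hδ : 0 < δ) :
    CollaredHomotopic IM (min (δ / 2) (1 / 3)) x₀ (concatFun hn (fun _ => x₀) L) L := by
  have h := collaredHomotopic_reparam (φ₀ := fun u => 2 * u - 1) (φ₁ := fun u => u) hL hLc
    ⟨0, hn⟩ (by fun_prop) contDiff_id (half_le_self hδ.le) fun u hu =>
      hu.imp (fun _ => ⟨by linarith, by linarith⟩) fun _ => ⟨by linarith, by linarith⟩
  rwa [reparam_id, ← hLc.const_concatFun hn hδ] at h

theorem collaredHomotopic_concat_const (hL : ContMDiff 𝓘(ℝ, Fin n → ℝ) IM ∞ L)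
    (hLc : IsCollared δ x₀ L) (hδ : 0 < δ) :
    CollaredHomotopic IM (min (δ / 2) (1 / 3)) x₀ (concatFun hn L fun _ => x₀) L := by
  have h := collaredHomotopic_reparam (φ₀ := fun u => 2 * u) (φ₁ := fun u => u) hL hLc
    ⟨0, hn⟩ (by fun_prop) contDiff_id (half_le_self hδ.le) fun u hu =>
      hu.imp (fun _ => ⟨by linarith, by linarith⟩) fun _ => ⟨by linarith, by linarith⟩
  rwa [reparam_id, ← hLc.concatFun_const hn hδ] at h

theorem collaredHomotopic_concat_reverse (hL : ContMDiff 𝓘(ℝ, Fin n → ℝ) IM ∞ L)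
    (hLc : IsCollared δ x₀ L) (hδ : 0 < δ) (hδ₁ : δ ≤ 1) :
    CollaredHomotopic IM (min (δ / 4) (1 / 3)) x₀ (concatFun hn L (reverseFun hn L))
      fun _ => x₀ := by
  have hη : 0 < δ / 4 := by positivity
  have hcollar (u : ℝ) (hu : u < δ / 4 ∨ 1 - δ / 4 < u) : smoothTent (δ / 4) u < δ ∧ 0 < δ := by
    refine ⟨?_, hδ⟩
    rcases hu with hu | hu
    · rw [smoothTent, blend_of_le hη (by linarith)]; linarith
    · rw [smoothTent, blend_of_ge hη (by linarith)]; linarith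
  have h := collaredHomotopic_reparam (φ₁ := fun _ => 0) hL hLc ⟨0, hn⟩ contDiff_smoothTent
    contDiff_const (by linarith) fun u hu => Or.inl (hcollar u hu)
  rw [← hLc.concatFun_reverseFun hn hδ] at h
  exact h.congr (fun _ _ => rfl) fun t _ => hLc.apply_update _ _ (Or.inl hδ)

theorem collaredHomotopic_assoc (hf : ContMDiff 𝓘(ℝ, Fin n → ℝ) IM ∞ f)
    (hg : ContMDiff 𝓘(ℝ, Fin n → ℝ) IM ∞ g) (hh : ContMDiff 𝓘(ℝ, Fin n → ℝ) IM ∞ h)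
    (hfc : IsCollared δ x₀ f) (hgc : IsCollared δ x₀ g) (hhc : IsCollared δ x₀ h) (hδ : 0 < δ)
    (hδ₁ : δ ≤ 1) :
    CollaredHomotopic IM (min (δ / 8) (1 / 3)) x₀ (concatFun hn (concatFun hn f g) h)
      (concatFun hn f (concatFun hn g h)) := by
  have hη : 0 < δ / 8 := by positivity
  have hfgc := hfc.concat hn hgc hδ
  have hhc' := hhc.mono (half_le_self hδ.le)
  have hM := (hf.concat hn hg hfc hgc hδ).concat hn hh hfgc hhc' (half_pos hδ)
  have hMc := hfgc.concat hn hhc' (half_pos hδ)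
  have hcollar (u : ℝ) (hu : u < δ / 8 ∨ 1 - δ / 8 < u) :
      (u < δ / 2 / 2 ∧ assocReparam (δ / 8) u < δ / 2 / 2) ∨
        (1 - δ / 2 / 2 < u ∧ 1 - δ / 2 / 2 < assocReparam (δ / 8) u) := by
    rcases hu with hu | hu
    · rw [assocReparam, blend_of_le hη (by linarith), blend_of_le hη (by linarith)]
      exact Or.inl ⟨by linarith, by linarith⟩
    · rw [assocReparam, blend_of_ge hη (by linarith)]
      exact Or.inr ⟨by linarith, by linarith⟩
  have h := collaredHomotopic_reparam (φ₀ := fun u => u) hM hMc ⟨0, hn⟩ contDiff_id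
    contDiff_assocReparam (by linarith) hcollar
  rwa [reparam_id, hfc.concatFun_assoc hn hgc hhc hδ hδ₁] at h

end Homotopy

section Loops

variable {E HM : Type*} [NormedAddCommGroup E] [NormedSpace ℝ E] [TopologicalSpace HM]
  {IM : ModelWithCorners ℝ E HM} {X : Type*} [TopologicalSpace X] [ChartedSpace HM X]
  {n : ℕ} {x₀ : X} (hn : 0 < n)

theorem exists_concat (a b : SmoothNLoop IM X n x₀) :
    ∃ c : SmoothNLoop IM X n x₀, ∀ t ∈ Cube n, c.toFun t = concatFun hn a.toFun b.toFun t := by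
  obtain ⟨δ, ⟨⟨La, hLa, hLac, ha⟩, ⟨Lb, hLb, hLbc, hb⟩⟩, (hδ : 0 < δ)⟩ :=
    ((a.eventually_collared.and b.eventually_collared).and self_mem_nhdsWithin).exists
  exact ⟨.ofCollared (hLa.concat hn hLb hLac hLbc hδ) (half_pos hδ) (hLac.concat hn hLbc hδ),
    concatFun_eqOn_cube hn ha hb⟩

theorem _root_.ThinHomotopic.concat {a a' b b' c c' : SmoothNLoop IM X n x₀}
    (ha : ThinHomotopic a a') (hb : ThinHomotopic b b')
    (hc : ∀ t ∈ Cube n, c.toFun t = concatFun hn a.toFun b.toFun t)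
    (hc' : ∀ t ∈ Cube n, c'.toFun t = concatFun hn a'.toFun b'.toFun t) : ThinHomotopic c c' := by
  obtain ⟨δ, ⟨hKa, hKb⟩, (hδ : 0 < δ)⟩ := ((ha.eventually_collaredHomotopic.and
    hb.eventually_collaredHomotopic).and self_mem_nhdsWithin).exists
  exact ((hKa.concat hn hKb hδ).congr (fun t ht => (hc t ht).symm)
    fun t ht => (hc' t ht).symm).thinHomotopic (half_pos hδ)

theorem thinHomotopic_assoc {a b c ab bc abc₁ abc₂ : SmoothNLoop IM X n x₀}
    (hab : ∀ t ∈ Cube n, ab.toFun t = concatFun hn a.toFun b.toFun t)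
    (hbc : ∀ t ∈ Cube n, bc.toFun t = concatFun hn b.toFun c.toFun t)
    (habc₁ : ∀ t ∈ Cube n, abc₁.toFun t = concatFun hn ab.toFun c.toFun t)
    (habc₂ : ∀ t ∈ Cube n, abc₂.toFun t = concatFun hn a.toFun bc.toFun t) :
    ThinHomotopic abc₁ abc₂ := by
  obtain ⟨δ, ⟨⟨⟨La, hLa, hLac, ha⟩, ⟨Lb, hLb, hLbc, hb⟩⟩, ⟨Lc, hLc, hLcc, hc⟩⟩, hδ⟩ :=
    (((a.eventually_collared.and b.eventually_collared).and c.eventually_collared).and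
      (Ioo_mem_nhdsGT one_pos)).exists
  obtain ⟨hδ₀, hδ₁⟩ := hδ
  have hab' : EqOn (concatFun hn La Lb) ab.toFun (Cube n) :=
    (concatFun_eqOn_cube hn ha hb).trans fun t ht => (hab t ht).symm
  have hbc' : EqOn (concatFun hn Lb Lc) bc.toFun (Cube n) :=
    (concatFun_eqOn_cube hn hb hc).trans fun t ht => (hbc t ht).symm
  exact ((collaredHomotopic_assoc hn hLa hLb hLc hLac hLbc hLcc hδ₀ hδ₁.le).congr
    ((concatFun_eqOn_cube hn hab' hc).trans fun t ht => (habc₁ t ht).symm)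
    ((concatFun_eqOn_cube hn ha hbc').trans fun t ht => (habc₂ t ht).symm)).thinHomotopic
    (by positivity)

theorem thinHomotopic_const_concat {a ea : SmoothNLoop IM X n x₀}
    (hea : ∀ t ∈ Cube n, ea.toFun t = concatFun hn (fun _ => x₀) a.toFun t) :
    ThinHomotopic ea a := by
  obtain ⟨δ, ⟨L, hL, hLc, ha⟩, (hδ : 0 < δ)⟩ := 
    (a.eventually_collared.and self_mem_nhdsWithin).exists
  exact ((collaredHomotopic_const_concat hn hL hLc hδ).congr
    ((concatFun_eqOn_cube hn (eqOn_refl _ _) ha).trans fun t ht => (hea t ht).symm)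
    ha).thinHomotopic (by positivity)

theorem thinHomotopic_concat_const {a ae : SmoothNLoop IM X n x₀}
    (hae : ∀ t ∈ Cube n, ae.toFun t = concatFun hn a.toFun (fun _ => x₀) t) :
    ThinHomotopic ae a := by
  obtain ⟨δ, ⟨L, hL, hLc, ha⟩, (hδ : 0 < δ)⟩ := 
    (a.eventually_collared.and self_mem_nhdsWithin).exists
  exact ((collaredHomotopic_concat_const hn hL hLc hδ).congr
    ((concatFun_eqOn_cube hn ha (eqOn_refl _ _)).trans fun t ht => (hae t ht).symm)
    ha).thinHomotopic (by positivity)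

theorem thinHomotopic_concat_reverse {L : (Fin n → ℝ) → X} {δ : ℝ}
    {ℓ ℓ' c e : SmoothNLoop IM X n x₀}
    (hL : ContMDiff 𝓘(ℝ, Fin n → ℝ) IM ∞ L) (hLc : IsCollared δ x₀ L) (hδ : 0 < δ) (hδ₁ : δ ≤ 1)
    (hℓ : EqOn ℓ.toFun L (Cube n)) (hℓ' : EqOn ℓ'.toFun (reverseFun hn L) (Cube n))
    (hc : ∀ t ∈ Cube n, c.toFun t = concatFun hn ℓ.toFun ℓ'.toFun t)
    (he : ∀ t ∈ Cube n, e.toFun t = x₀) : ThinHomotopic c e :=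
  ((collaredHomotopic_concat_reverse hn hL hLc hδ hδ₁).congr
    (fun t ht => (concatFun_eqOn_cube hn hℓ hℓ' ht).symm.trans (hc t ht).symm)
    fun t ht => (he t ht).symm).thinHomotopic (by positivity)

theorem thinHomotopic_inverse {a ar aar ara e : SmoothNLoop IM X n x₀}
    (har : ∀ t ∈ Cube n, ar.toFun t = reverseFun hn a.toFun t)
    (haar : ∀ t ∈ Cube n, aar.toFun t = concatFun hn a.toFun ar.toFun t)
    (hara : ∀ t ∈ Cube n, ara.toFun t = concatFun hn ar.toFun a.toFun t)
    (he : ∀ t ∈ Cube n, e.toFun t = x₀) : ThinHomotopic aar e ∧ ThinHomotopic ara e := by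
  obtain ⟨δ, ⟨L, hL, hLc, ha⟩, hδ⟩ := (a.eventually_collared.and (Ioo_mem_nhdsGT one_pos)).exists
  obtain ⟨hδ₀, hδ₁⟩ := hδ
  have har' : EqOn ar.toFun (reverseFun hn L) (Cube n) :=
    fun t ht => (har t ht).trans (reverseFun_eqOn_cube hn ha.symm ht)
  refine ⟨thinHomotopic_concat_reverse hn hL hLc hδ₀ hδ₁.le ha.symm har' haar he,
    thinHomotopic_concat_reverse hn (hL.reverse hn) (hLc.reverse hn) hδ₀ hδ₁.le har' ?_ hara he⟩
  rw [reverseFun_reverseFun]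
  exact ha.symm

end Loops

end ThinHomotopy

theorem pinn_group_general {E HM : Type*} [NormedAddCommGroup E] [NormedSpace ℝ E]
    [TopologicalSpace HM] (IM : ModelWithCorners ℝ E HM)
    (X : Type*) [TopologicalSpace X] [ChartedSpace HM X]
    (n : ℕ) (hn : 0 < n) (x₀ : X) :
    -- concatenations exist
    (∀ a b : SmoothNLoop IM X n x₀, ∃ c : SmoothNLoop IM X n x₀,
        ∀ t ∈ Cube n, c.toFun t = concatFun hn a.toFun b.toFun t) ∧
    -- the operation is well defined on rank-`n` homotopy classes
    (∀ a a' b b' c c' : SmoothNLoop IM X n x₀,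
        ThinHomotopic a a' → ThinHomotopic b b' →
        (∀ t ∈ Cube n, c.toFun t = concatFun hn a.toFun b.toFun t) →
        (∀ t ∈ Cube n, c'.toFun t = concatFun hn a'.toFun b'.toFun t) →
        ThinHomotopic c c') ∧
    -- associativity
    (∀ a b c ab bc abc₁ abc₂ : SmoothNLoop IM X n x₀,
        (∀ t ∈ Cube n, ab.toFun t = concatFun hn a.toFun b.toFun t) →
        (∀ t ∈ Cube n, bc.toFun t = concatFun hn b.toFun c.toFun t) →
        (∀ t ∈ Cube n, abc₁.toFun t = concatFun hn ab.toFun c.toFun t) →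
        (∀ t ∈ Cube n, abc₂.toFun t = concatFun hn a.toFun bc.toFun t) →
        ThinHomotopic abc₁ abc₂) ∧
    -- the class of the constant loop is a two-sided identity
    (∀ a ea ae : SmoothNLoop IM X n x₀,
        (∀ t ∈ Cube n, ea.toFun t = concatFun hn (fun _ => x₀) a.toFun t) →
        (∀ t ∈ Cube n, ae.toFun t = concatFun hn a.toFun (fun _ => x₀) t) →
        ThinHomotopic ea a ∧ ThinHomotopic ae a) ∧
    -- the class of the reverse is a two-sided inverse
    (∀ a ar aar ara e : SmoothNLoop IM X n x₀,
        (∀ t ∈ Cube n, ar.toFun t = reverseFun hn a.toFun t) →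
        (∀ t ∈ Cube n, aar.toFun t = concatFun hn a.toFun ar.toFun t) →
        (∀ t ∈ Cube n, ara.toFun t = concatFun hn ar.toFun a.toFun t) →
        (∀ t ∈ Cube n, e.toFun t = x₀) →
        ThinHomotopic aar e ∧ ThinHomotopic ara e) := by
  exact ⟨ThinHomotopy.exists_concat hn, fun _ _ _ _ _ _ => ThinHomotopic.concat hn,
    fun _ _ _ _ _ _ _ => ThinHomotopy.thinHomotopic_assoc hn,
    fun _ _ _ hea hae => ⟨ThinHomotopy.thinHomotopic_const_concat hn hea,
      ThinHomotopy.thinHomotopic_concat_const hn hae⟩,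
    fun _ _ _ _ _ => ThinHomotopy.thinHomotopic_inverse hn⟩

/-- `π_n^n(X,x₀)` is a group under `[ℓ₁]·[ℓ₂] = [ℓ₁ ⋆ ℓ₂]`: concatenations
of smooth `n`-loops exist as smooth `n`-loops, the operation is well defined on rank-`n`
homotopy classes and associative, the class of the constant loop is a two-sided identity,
and the class of the reverse loop is a two-sided inverse.  (A smooth `n`-loop `c`
represents `ℓ₁ ⋆ ℓ₂` iff it agrees with the concatenation formula on the cube.) -/
theorem pinn_group {E HM : Type*} [NormedAddCommGroup E] [NormedSpace ℝ E]
    [TopologicalSpace HM] (IM : ModelWithCorners ℝ E HM)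
    (X : Type*) [TopologicalSpace X] [ChartedSpace HM X] [IsManifold IM (⊤ : ℕ∞) X]
    (n : ℕ) (hn : 0 < n) (x₀ : X) :
    -- concatenations exist
    (∀ a b : SmoothNLoop IM X n x₀, ∃ c : SmoothNLoop IM X n x₀,
        ∀ t ∈ Cube n, c.toFun t = concatFun hn a.toFun b.toFun t) ∧
    -- the operation is well defined on rank-`n` homotopy classes
    (∀ a a' b b' c c' : SmoothNLoop IM X n x₀,
        ThinHomotopic a a' → ThinHomotopic b b' →
        (∀ t ∈ Cube n, c.toFun t = concatFun hn a.toFun b.toFun t) →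
        (∀ t ∈ Cube n, c'.toFun t = concatFun hn a'.toFun b'.toFun t) →
        ThinHomotopic c c') ∧
    -- associativity
    (∀ a b c ab bc abc₁ abc₂ : SmoothNLoop IM X n x₀,
        (∀ t ∈ Cube n, ab.toFun t = concatFun hn a.toFun b.toFun t) →
        (∀ t ∈ Cube n, bc.toFun t = concatFun hn b.toFun c.toFun t) →
        (∀ t ∈ Cube n, abc₁.toFun t = concatFun hn ab.toFun c.toFun t) →
        (∀ t ∈ Cube n, abc₂.toFun t = concatFun hn a.toFun bc.toFun t) →
        ThinHomotopic abc₁ abc₂) ∧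
    -- the class of the constant loop is a two-sided identity
    (∀ a ea ae : SmoothNLoop IM X n x₀,
        (∀ t ∈ Cube n, ea.toFun t = concatFun hn (fun _ => x₀) a.toFun t) →
        (∀ t ∈ Cube n, ae.toFun t = concatFun hn a.toFun (fun _ => x₀) t) →
        ThinHomotopic ea a ∧ ThinHomotopic ae a) ∧
    -- the class of the reverse is a two-sided inverse
    (∀ a ar aar ara e : SmoothNLoop IM X n x₀,
        (∀ t ∈ Cube n, ar.toFun t = reverseFun hn a.toFun t) →
        (∀ t ∈ Cube n, aar.toFun t = concatFun hn a.toFun ar.toFun t) →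
        (∀ t ∈ Cube n, ara.toFun t = concatFun hn ar.toFun a.toFun t) →
        (∀ t ∈ Cube n, e.toFun t = x₀) →
        ThinHomotopic aar e ∧ ThinHomotopic ara e) :=
  pinn_group_general IM X n hn x₀

end
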